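/- Let a be a minimal automorphism of a spherically homogeneous rooted tree T whose vertex levels have cardinalities p_n = m_1⋯m_n, and let k ≥ 1 be an integer. Then a^k is minimal if and only if gcd(k, p_n) = 1 for every n ≥ 1. -/

import Mathlib

/-- The boundary of the spherically homogeneous rooted tree with spherical
index `m`: infinite paths are sequences `x` with `x n ∈ {0, …, m n - 1}`. -/
abbrev Bd (m : ℕ → ℕ) : Type := ∀ n : ℕ, Fin (m n)

/-- A permutation of the boundary is a tree automorphism iff it preserves the
relation "agree on the first `N` coordinates" (i.e. it permutes each vertex
level preserving the tree structure). -/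
def IsTreeAut {m : ℕ → ℕ} (e : Equiv.Perm (Bd m)) : Prop :=
  ∀ (N : ℕ) (x y : Bd m), (∀ n < N, x n = y n) ↔ (∀ n < N, e x n = e y n)

/-- The automorphism group of the spherically homogeneous rooted tree with
spherical index `m`, realized as a subgroup of the permutations of the
boundary. -/
def treeAutGroup (m : ℕ → ℕ) : Subgroup (Equiv.Perm (Bd m)) where
  carrier := {e | IsTreeAut e}
  one_mem' := fun _ _ _ => Iff.rfl
  mul_mem' := by
    intro a b ha hb N x y
    exact (hb N x y).trans (ha N (b x) (b y))
  inv_mem' := by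
    intro a ha N x y
    have h := ha N (a⁻¹ x) (a⁻¹ y)
    simpa [Equiv.Perm.inv_def] using h.symm

/-- The orbit of `x` under the cyclic group generated by `a`. -/
def orbitZ {m : ℕ → ℕ} (a : Equiv.Perm (Bd m)) (x : Bd m) : Set (Bd m) :=
  {y | ∃ k : ℤ, (a ^ k) x = y}

/-- `a` acts transitively on every vertex level `V n` (vertices at level `n`
are identified with length-`n` prefixes of boundary points). -/
def LevelTransitive {m : ℕ → ℕ} (a : Equiv.Perm (Bd m)) : Prop :=
  ∀ (n : ℕ) (x y : Bd m), ∃ k : ℤ, ∀ i < n, ((a ^ k) x) i = y i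

/-- `f` belongs to the closure of the set `Γ` of tree automorphisms in the
profinite (= uniform) topology on `Aut(T)`: for every level `n` there is an
element of `Γ` agreeing with `f` up to level `n` everywhere. -/
def InClosure {m : ℕ → ℕ} (Γ : Set (Equiv.Perm (Bd m))) (f : Bd m → Bd m) : Prop :=
  ∀ n : ℕ, ∃ g ∈ Γ, ∀ x : Bd m, ∀ i < n, f x i = g x i

/-!
A tree automorphism permutes every level `V n`, and truncating a boundary point to its
length-`n` prefix intertwines the action on the boundary with the action on `V n`. Hence `a ^ k`
is minimal iff it is transitive on every finite level. Since `a` is transitive on `V n`, it acts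
there as a single `p n`-cycle, and the `k`-th power of an `N`-cycle is again an `N`-cycle exactly
when `k` is coprime to `N`.
-/

namespace Equiv.Perm

variable {α : Type*} [Fintype α] [DecidableEq α] {σ : Perm α}

theorem isCycle_and_support_eq_univ_of_forall_sameCycle [Nontrivial α]
    (h : ∀ x y, σ.SameCycle x y) : σ.IsCycle ∧ σ.support = Finset.univ := by
  have hmoves : ∀ x, σ x ≠ x := by
    intro x hx
    obtain ⟨y, hy⟩ := exists_ne x
    obtain ⟨z, rfl⟩ := h x y
    exact hy (zpow_apply_eq_self_of_apply_eq_self hx z)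
  obtain ⟨x⟩ := (inferInstance : Nonempty α)
  exact ⟨⟨x, hmoves x, fun y _ => h x y⟩,
    Finset.eq_univ_of_forall fun y => mem_support.2 (hmoves y)⟩

theorem forall_sameCycle_pow_iff_coprime [Nonempty α] (h : ∀ x y, σ.SameCycle x y) (k : ℕ) :
    (∀ x y, (σ ^ k).SameCycle x y) ↔ k.Coprime (Fintype.card α) := by
  rcases subsingleton_or_nontrivial α with _ | _
  · have hcard : Fintype.card α = 1 :=
      le_antisymm (Fintype.card_le_one_iff_subsingleton.2 ‹_›) Fintype.card_pos
    simp [hcard, SameCycle.refl]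
  obtain ⟨hσ, hsupp⟩ := isCycle_and_support_eq_univ_of_forall_sameCycle h
  have hord : orderOf σ = Fintype.card α := by rw [hσ.orderOf, hsupp, Finset.card_univ]
  rw [← hord, ← hσ.pow_iff]
  refine ⟨fun hk => (isCycle_and_support_eq_univ_of_forall_sameCycle hk).1, fun hk x y => ?_⟩
  have hsupp_pow : (σ ^ k).support = Finset.univ :=
    (support_pow_coprime (hσ.pow_iff.1 hk)).trans hsupp
  exact hk.sameCycle (mem_support.1 (hsupp_pow ▸ Finset.mem_univ x))
    (mem_support.1 (hsupp_pow ▸ Finset.mem_univ y))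

end Equiv.Perm

abbrev Level (m : ℕ → ℕ) (n : ℕ) : Type := ∀ i : Fin n, Fin (m i)

theorem card_level (m : ℕ → ℕ) (n : ℕ) :
    Fintype.card (Level m n) = ∏ i ∈ Finset.range n, m i := by
  simp [Fintype.card_pi, Fin.prod_univ_eq_prod_range]

namespace Bd

variable {m : ℕ → ℕ}

def trunc (n : ℕ) (x : Bd m) : Level m n := fun i => x i

theorem trunc_eq_trunc_iff {n : ℕ} {x y : Bd m} :
    trunc n x = trunc n y ↔ ∀ i < n, x i = y i := by
  simp only [funext_iff, trunc, Fin.forall_iff]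

theorem trunc_surjective [∀ i, NeZero (m i)] (n : ℕ) : Function.Surjective (trunc (m := m) n) :=
  fun v => ⟨fun j => if h : j < n then v ⟨j, h⟩ else 0, funext fun i => dif_pos i.isLt⟩

end Bd

theorem IsTreeAut.trunc_apply_congr {m : ℕ → ℕ} {e : Equiv.Perm (Bd m)} (he : IsTreeAut e)
    {n : ℕ} {x y : Bd m} (h : Bd.trunc n x = Bd.trunc n y) :
    Bd.trunc n (e x) = Bd.trunc n (e y) := by
  rw [Bd.trunc_eq_trunc_iff] at h ⊢
  exact (he n x y).1 h

namespace treeAutGroup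

variable {m : ℕ → ℕ} [∀ i, NeZero (m i)]

-- A vertex is lifted to any boundary point through it; since `e` preserves prefixes, the
-- resulting vertex does not depend on the lift.
noncomputable instance (n : ℕ) : MulAction (treeAutGroup m) (Level m n) where
  smul e v := Bd.trunc n ((e : Equiv.Perm (Bd m)) (Function.surjInv (Bd.trunc_surjective n) v))
  one_smul := Function.surjInv_eq (Bd.trunc_surjective n)
  mul_smul e _ _ := e.2.trunc_apply_congr (Function.surjInv_eq (Bd.trunc_surjective n) _).symm

theorem smul_trunc {n : ℕ} (e : treeAutGroup m) (x : Bd m) :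
    e • Bd.trunc n x = Bd.trunc n ((e : Equiv.Perm (Bd m)) x) :=
  e.2.trunc_apply_congr (Function.surjInv_eq (Bd.trunc_surjective n) _)

theorem levelTransitive_iff_forall_sameCycle (e : treeAutGroup m) :
    LevelTransitive (e : Equiv.Perm (Bd m)) ↔
      ∀ n (v w : Level m n),
        (MulAction.toPermHom (treeAutGroup m) (Level m n) e).SameCycle v w := by
  have hzpow : ∀ n (z : ℤ) (x : Bd m), (MulAction.toPermHom (treeAutGroup m) (Level m n) e ^ z)
      (Bd.trunc n x) = Bd.trunc n (((e : Equiv.Perm (Bd m)) ^ z) x) := by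
    intro n z x
    rw [← map_zpow, ← Subgroup.coe_zpow]
    exact smul_trunc (e ^ z) x
  refine forall_congr' fun n => ?_
  simp only [Equiv.Perm.SameCycle, (Bd.trunc_surjective n).forall, hzpow, Bd.trunc_eq_trunc_iff]

end treeAutGroup

theorem settled_stmt11_general {m : ℕ → ℕ} (hm : ∀ n, 2 ≤ m n)
    (a : Equiv.Perm (Bd m)) (ha : a ∈ treeAutGroup m) (hamin : LevelTransitive a)
    (k : ℕ) :
    LevelTransitive (a ^ k) ↔ ∀ n : ℕ, Nat.Coprime k (∏ i ∈ Finset.range n, m i) := by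
  have : ∀ n, NeZero (m n) := fun n => ⟨by have := hm n; omega⟩
  let A : treeAutGroup m := ⟨a, ha⟩
  have hA := (treeAutGroup.levelTransitive_iff_forall_sameCycle A).1 hamin
  rw [show a ^ k = ((A ^ k : treeAutGroup m) : Equiv.Perm (Bd m)) from rfl,
    treeAutGroup.levelTransitive_iff_forall_sameCycle]
  refine forall_congr' fun n => ?_
  rw [map_pow, ← card_level]
  exact Equiv.Perm.forall_sameCycle_pow_iff_coprime (hA n) k

/-- Let `a` be a minimal automorphism of a spherically homogeneous rooted
tree whose vertex level `V n` has cardinality `p n = m 0 * ⋯ * m (n-1)`, and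
let `k ≥ 1`. Then `a ^ k` is minimal if and only if `gcd (k, p n) = 1` for
every `n ≥ 1`. -/
theorem settled_stmt11 {m : ℕ → ℕ} (hm : ∀ n, 2 ≤ m n)
    (a : Equiv.Perm (Bd m)) (ha : a ∈ treeAutGroup m) (hamin : LevelTransitive a)
    (k : ℕ) (hk : 1 ≤ k) :
    LevelTransitive (a ^ k) ↔ ∀ n : ℕ, Nat.Coprime k (∏ i ∈ Finset.range n, m i) :=
  settled_stmt11_general hm a ha hamin k
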